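/- arXiv:1002.5025 — 8 statements merged into one kernel-verified Lean document; each statement's English description precedes it below -/
import Mathlib

section
/- In every quasi-MV algebra, x ⊕ ¬x = 1 and x ⊙ ¬x = 0. -/
/-- A quasi-MV algebra. -/
class QMV (α : Type*) where
  add : α → α → α
  neg : α → α
  zero : α
  one : α
  add_assoc : ∀ x y z : α, add x (add y z) = add (add x y) z
  neg_neg : ∀ x : α, neg (neg x) = x
  add_one : ∀ x : α, add x one = one
  luk : ∀ x y : α, add (neg (add (neg x) y)) y = add (neg (add (neg y) x)) x
  neg_add_zero : ∀ x : α, neg (add x zero) = add (neg x) zero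
  add_add_zero : ∀ x y : α, add (add x y) zero = add x y
  neg_zero : neg (zero : α) = one

namespace QMV
variable {α : Type*} [QMV α]
/-- `x ⊙ y := ¬(¬x ⊕ ¬y)` -/
def odot (x y : α) : α := neg (add (neg x) (neg y))
/-- `x ∧ y := x ⊙ (¬x ⊕ y)` -/
def inf (x y : α) : α := odot x (add (neg x) y)
/-- `x ≤ y iff ¬x ⊕ y = 1` -/
def le (x y : α) : Prop := add (neg x) y = one
end QMV

section Aux
open QMV (add neg zero one add_one luk neg_add_zero add_add_zero)
variable {α : Type*} [QMV α]

lemma qmv_neg_one : neg (one : α) = zero := by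
  rw [← QMV.neg_zero (α := α), QMV.neg_neg]

lemma qmv_aux1 (y : α) : add (neg (add zero y)) y = one := by
  have h := luk (one : α) y
  rw [qmv_neg_one, add_one] at h
  exact h

lemma qmv_one_add (x : α) : add (one : α) x = one := by
  have h := qmv_aux1 (add one x)
  rw [QMV.add_assoc, QMV.add_assoc, add_one] at h
  exact h

lemma qmv_zero_add (x : α) : add (zero : α) x = add x zero := by
  have h := luk x (zero : α)
  rw [QMV.neg_zero, qmv_one_add, qmv_neg_one] at h
  have h1 : neg (add (neg x) zero) = add x zero := by
    rw [← neg_add_zero, QMV.neg_neg]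
  rw [h1, add_add_zero] at h
  exact h.symm

lemma qmv_add_neg (x : α) : add x (neg x) = one := by
  have h := qmv_aux1 (neg x)
  rw [qmv_zero_add, ← neg_add_zero, QMV.neg_neg, ← QMV.add_assoc, qmv_zero_add,
    QMV.add_assoc, add_add_zero] at h
  exact h
end Aux

/-- In every quasi-MV algebra, `x ⊕ ¬x = 1` and `x ⊙ ¬x = 0`. -/
theorem qmv_add_neg_and_odot_neg {α : Type*} [QMV α] (x : α) :
    QMV.add x (QMV.neg x) = QMV.one ∧ QMV.odot x (QMV.neg x) = QMV.zero := by
  constructor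
  · exact qmv_add_neg x
  · unfold QMV.odot
    rw [qmv_add_neg (QMV.neg x), qmv_neg_one]
end

section
/- In every √qPMV-algebra: (1) a • 0 = 0; (2) if a • b = 1 then a ⊕ 0 = 1 and b ⊕ 0 = 1; (3) if a ≤ b then a • x ≤ b • x; (4) x • y ≤ x; (5) x • (y ⊕ 0) = (x • y) ⊕ 0. -/
/-- A √qPMV-algebra structure on a quasi-MV algebra. -/
class SQPMV (α : Type*) [QMV α] where
  half : α
  sqrt : α → α
  mul : α → α → α
  sqrt_neg : ∀ x : α, sqrt (QMV.neg x) = QMV.neg (sqrt x)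
  sqrt_sqrt : ∀ x : α, sqrt (sqrt x) = QMV.neg x
  sqrt_add : ∀ x y : α, QMV.add (sqrt (QMV.add x y)) QMV.zero = half
  sqrt_half : sqrt half = half
  mul_comm : ∀ x y : α, mul x y = mul y x
  mul_assoc : ∀ x y z : α, mul x (mul y z) = mul (mul x y) z
  mul_one : ∀ x : α, mul x QMV.one = QMV.add x QMV.zero
  mul_reg : ∀ x y : α, mul x y = QMV.add (mul x y) QMV.zero
  mul_distrib : ∀ x y z : α,
    mul x (QMV.odot y (QMV.neg z)) = QMV.odot (mul x y) (QMV.neg (mul x z))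
  sqrt_mul : ∀ x y : α, QMV.add (sqrt (mul x y)) QMV.zero = half

section Aux
variable {α : Type*} [QMV α]

lemma qmv_neg_one_s6 : QMV.neg (QMV.one : α) = QMV.zero := by
  rw [← QMV.neg_zero, QMV.neg_neg]

lemma qmv_F1 (x : α) :
    QMV.add (QMV.neg (QMV.add QMV.zero x)) x = QMV.one := by
  have h := QMV.luk x (QMV.one : α)
  rw [QMV.add_one, qmv_neg_one_s6] at h
  exact h.symm

lemma qmv_one_add_s6 (x : α) : QMV.add QMV.one x = QMV.one := by
  have habs : ∀ y : α, QMV.add y (QMV.add QMV.one x) = QMV.add QMV.one x := fun y => by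
    rw [QMV.add_assoc, QMV.add_one]
  have h1 := qmv_F1 (QMV.add QMV.one x)
  rw [habs QMV.zero] at h1
  rw [habs (QMV.neg (QMV.add QMV.one x))] at h1
  exact h1

lemma qmv_zero_add_s6 (y : α) : QMV.add QMV.zero y = QMV.add y QMV.zero := by
  have h := QMV.luk QMV.zero y
  rw [QMV.neg_zero, qmv_one_add_s6, qmv_neg_one_s6, QMV.neg_add_zero, QMV.neg_neg,
    QMV.add_add_zero] at h
  exact h

lemma qmv_neg_add_self (x : α) : QMV.add (QMV.neg x) x = QMV.one := by
  calc QMV.add (QMV.neg x) x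
      = QMV.add (QMV.add (QMV.neg x) x) QMV.zero := (QMV.add_add_zero _ _).symm
    _ = QMV.add (QMV.neg x) (QMV.add x QMV.zero) := (QMV.add_assoc _ _ _).symm
    _ = QMV.add (QMV.neg x) (QMV.add QMV.zero x) := by rw [qmv_zero_add_s6]
    _ = QMV.add (QMV.add (QMV.neg x) QMV.zero) x := QMV.add_assoc _ _ _
    _ = QMV.add (QMV.neg (QMV.add x QMV.zero)) x := by rw [QMV.neg_add_zero]
    _ = QMV.add (QMV.neg (QMV.add QMV.zero x)) x := by rw [qmv_zero_add_s6]
    _ = QMV.one := qmv_F1 x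

end Aux

section Aux2
variable {α : Type*} [QMV α] [SQPMV α]

lemma sq_mul_zero (a : α) : SQPMV.mul a QMV.zero = QMV.zero := by
  have h := SQPMV.mul_distrib a (QMV.one : α) QMV.one
  have e1 : QMV.odot (QMV.one : α) (QMV.neg QMV.one) = QMV.zero := by
    simp only [QMV.odot]
    rw [QMV.neg_neg, QMV.add_one, qmv_neg_one_s6]
  have e2 : QMV.odot (SQPMV.mul a QMV.one) (QMV.neg (SQPMV.mul a QMV.one)) = QMV.zero := by
    simp only [QMV.odot]
    rw [QMV.neg_neg, qmv_neg_add_self, qmv_neg_one_s6]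
  rw [e1, e2] at h
  exact h

lemma sq_le_mul_mono {a b : α} (x : α) (h : QMV.le a b) :
    QMV.le (SQPMV.mul a x) (SQPMV.mul b x) := by
  have h' : QMV.add (QMV.neg a) b = QMV.one := h
  have e1 : QMV.odot a (QMV.neg b) = QMV.zero := by
    simp only [QMV.odot]
    rw [QMV.neg_neg, h', qmv_neg_one_s6]
  have hd := SQPMV.mul_distrib x a b
  rw [e1, sq_mul_zero] at hd
  have hd' : QMV.neg (QMV.add (QMV.neg (SQPMV.mul x a)) (SQPMV.mul x b)) = QMV.zero := by
    have h2 := hd.symm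
    simp only [QMV.odot] at h2
    rwa [QMV.neg_neg] at h2
  have h3 := congrArg QMV.neg hd'
  rw [QMV.neg_neg, QMV.neg_zero] at h3
  show QMV.add (QMV.neg (SQPMV.mul a x)) (SQPMV.mul b x) = QMV.one
  rw [SQPMV.mul_comm a x, SQPMV.mul_comm b x]
  exact h3

lemma sq_mul_le_left (x y : α) : QMV.le (SQPMV.mul x y) x := by
  have h1 : QMV.le y (QMV.one : α) := QMV.add_one _
  have h2' : QMV.add (QMV.neg (SQPMV.mul y x)) (SQPMV.mul QMV.one x) = QMV.one :=
    sq_le_mul_mono x h1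
  rw [SQPMV.mul_comm (QMV.one : α) x, SQPMV.mul_one, SQPMV.mul_comm y x] at h2'
  show QMV.add (QMV.neg (SQPMV.mul x y)) x = QMV.one
  calc QMV.add (QMV.neg (SQPMV.mul x y)) x
      = QMV.add (QMV.add (QMV.neg (SQPMV.mul x y)) QMV.zero) x := by
        rw [← QMV.neg_add_zero, ← SQPMV.mul_reg]
    _ = QMV.add (QMV.neg (SQPMV.mul x y)) (QMV.add QMV.zero x) := (QMV.add_assoc _ _ _).symm
    _ = QMV.add (QMV.neg (SQPMV.mul x y)) (QMV.add x QMV.zero) := by rw [qmv_zero_add_s6]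
    _ = QMV.one := h2'

end Aux2

/-- Basic arithmetic of `•` in √qPMV-algebras (Proposition on √qPMV-algebras, items 1–5). -/
theorem sqpmv_mul_basic {α : Type*} [QMV α] [SQPMV α] (a b x y : α) :
    SQPMV.mul a QMV.zero = QMV.zero ∧
    (SQPMV.mul a b = QMV.one → QMV.add a QMV.zero = QMV.one ∧ QMV.add b QMV.zero = QMV.one) ∧
    (QMV.le a b → QMV.le (SQPMV.mul a x) (SQPMV.mul b x)) ∧
    QMV.le (SQPMV.mul x y) x ∧
    SQPMV.mul x (QMV.add y QMV.zero) = QMV.add (SQPMV.mul x y) QMV.zero := by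
  refine ⟨sq_mul_zero a, ?_, fun h => sq_le_mul_mono x h, sq_mul_le_left x y, ?_⟩
  · intro h
    constructor
    · have h2 : QMV.add (QMV.neg (SQPMV.mul a b)) a = QMV.one := sq_mul_le_left a b
      rw [h, qmv_neg_one_s6, qmv_zero_add_s6] at h2
      exact h2
    · have h2 : QMV.add (QMV.neg (SQPMV.mul b a)) b = QMV.one := sq_mul_le_left b a
      rw [SQPMV.mul_comm b a, h, qmv_neg_one_s6, qmv_zero_add_s6] at h2
      exact h2
  · have hd := SQPMV.mul_distrib x y QMV.zero
    have e1 : QMV.odot y (QMV.neg QMV.zero) = QMV.add y QMV.zero := by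
      simp only [QMV.odot]
      rw [QMV.neg_neg, QMV.neg_add_zero, QMV.neg_neg]
    have e2 : QMV.odot (SQPMV.mul x y) (QMV.neg (SQPMV.mul x QMV.zero))
        = QMV.add (SQPMV.mul x y) QMV.zero := by
      rw [sq_mul_zero]
      simp only [QMV.odot]
      rw [QMV.neg_neg, QMV.neg_add_zero, QMV.neg_neg]
    rw [e1, e2] at hd
    exact hd
end

section
/- In a √qPMV-algebra A, the set R(A) = {a ∈ A : a ⊕ 0 = a} of regular elements is closed under ⊕, •, ¬ and contains 0, ½, 1, and (R(A), ⊕, •, ¬, 0, ½, 1) is a PMV-algebra. -/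
/-- An MV-algebra. -/
class MV (α : Type*) where
  add : α → α → α
  neg : α → α
  zero : α
  add_assoc : ∀ x y z : α, add x (add y z) = add (add x y) z
  add_comm : ∀ x y : α, add x y = add y x
  add_zero : ∀ x : α, add x zero = x
  neg_neg : ∀ x : α, neg (neg x) = x
  add_top : ∀ x : α, add x (neg zero) = neg zero
  luk : ∀ x y : α, add (neg (add (neg x) y)) y = add (neg (add (neg y) x)) x

namespace MV
variable {α : Type*} [MV α]
/-- `1 := ¬0` -/
def one : α := neg zero
/-- `x ⊙ y := ¬(¬x ⊕ ¬y)` -/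
def odot (x y : α) : α := neg (add (neg x) (neg y))
/-- `x ∧ y := x ⊙ (¬x ⊕ y)` -/
def inf (x y : α) : α := odot x (add (neg x) y)
/-- `x ≤ y iff ¬x ⊕ y = 1` -/
def le (x y : α) : Prop := add (neg x) y = one
end MV

/-- A product MV-algebra (PMV-algebra): an MV-algebra with a commutative monoid
product (unit `1`) satisfying `x • (y ⊙ ¬z) = (x • y) ⊙ ¬(x • z)`. -/
class PMV (α : Type*) [MV α] where
  mul : α → α → α
  mul_comm : ∀ x y : α, mul x y = mul y x
  mul_assoc : ∀ x y z : α, mul x (mul y z) = mul (mul x y) z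
  mul_one : ∀ x : α, mul x MV.one = x
  mul_distrib : ∀ x y z : α,
    mul x (MV.odot y (MV.neg z)) = MV.odot (mul x y) (MV.neg (mul x z))

/-- Regular elements of a √qPMV-algebra: `a ⊕ 0 = a`. -/
def Reg {α : Type*} [QMV α] (a : α) : Prop := QMV.add a QMV.zero = a

/-!
In a quasi-MV algebra every element of the form `x ⊕ y` is regular, and Łukasiewicz's axiom
forces `0 ⊕ a = a` for regular `a`, `¬x ⊕ x = 1` and commutativity of `⊕`. Regular elements are
therefore closed under the MV-operations and satisfy all MV-axioms; `•` always lands in them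
(`x • y = x • y ⊕ 0`), and on them `1` is its unit because `x • 1 = x ⊕ 0`.
-/

namespace QMV

variable {α : Type*} [QMV α]

theorem reg_add (x y : α) : Reg (add x y) := add_add_zero x y

theorem _root_.Reg.neg {a : α} (h : Reg a) : Reg (neg a) := by
  rw [Reg, ← neg_add_zero, h]

theorem neg_one : neg (one : α) = zero := by
  rw [← neg_zero, QMV.neg_neg]

theorem neg_zero_add_add_self (x : α) : add (neg (add zero x)) x = one := by
  have h := luk x (one : α)
  rw [add_one, neg_one] at h
  exact h.symm

theorem one_add (x : α) : add one x = one := by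
  have hreg : Reg (add one x) := reg_add one x
  have hzero_add : add zero (add one x) = add one x := by
    rw [QMV.add_assoc, add_one]
  have h_neg_add_self := neg_zero_add_add_self (add one x)
  rw [hzero_add] at h_neg_add_self
  have h := luk (add one x) (zero : α)
  rw [hreg.neg, QMV.neg_neg, hreg, neg_zero, QMV.add_assoc one one x, add_one,
    h_neg_add_self] at h
  exact h

theorem _root_.Reg.zero_add {a : α} (h : Reg a) : add zero a = a := by
  have hl := luk a (zero : α)
  rw [h.neg, QMV.neg_neg, h, neg_zero, one_add, neg_one] at hl
  exact hl.symm

theorem neg_add_self (x : α) : add (neg x) x = one := by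
  have hr : Reg (add x zero) := reg_add x zero
  have h := neg_zero_add_add_self (add x zero)
  rw [hr.zero_add, neg_add_zero] at h
  calc add (neg x) x
      = add (neg x) (add x zero) := by rw [QMV.add_assoc, add_add_zero]
    _ = add (add (neg x) zero) (add x zero) := by rw [← QMV.add_assoc, hr.zero_add]
    _ = one := h

theorem neg_add_add_swap (x y : α) : add (neg (add x y)) (add y x) = one := by
  have h := luk (neg x) y
  rw [QMV.neg_neg] at h
  rw [QMV.add_assoc, h, ← QMV.add_assoc, neg_add_self, add_one]

theorem add_comm (x y : α) : add x y = add y x := by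
  have h := luk (add x y) (add y x)
  rw [neg_add_add_swap, neg_add_add_swap, neg_one, (reg_add y x).zero_add,
    (reg_add x y).zero_add] at h
  exact h.symm

theorem reg_zero : Reg (zero : α) := by
  have h := neg_zero_add_add_self (zero : α)
  rw [(reg_add zero zero).neg] at h
  rw [Reg, ← QMV.neg_neg (add zero zero), h, neg_one]

theorem reg_one : Reg (one : α) := one_add zero

instance regMV : MV {a : α // Reg a} where
  add a b := ⟨add a.1 b.1, reg_add _ _⟩
  neg a := ⟨neg a.1, a.2.neg⟩
  zero := ⟨zero, reg_zero⟩
  add_assoc _ _ _ := Subtype.ext (QMV.add_assoc _ _ _)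
  add_comm _ _ := Subtype.ext (QMV.add_comm _ _)
  add_zero a := Subtype.ext a.2
  neg_neg _ := Subtype.ext (QMV.neg_neg _)
  add_top a := Subtype.ext (by
    change add a.1 (neg zero) = neg zero
    rw [QMV.neg_zero, add_one])
  luk _ _ := Subtype.ext (luk _ _)

end QMV

namespace SQPMV

open QMV

variable {α : Type*} [QMV α] [SQPMV α]

theorem reg_half : Reg (half : α) := by
  rw [← sqrt_add zero zero]
  exact reg_add _ _

theorem reg_mul (a b : α) : Reg (mul a b) := (mul_reg a b).symm

instance regPMV : PMV {a : α // Reg a} where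
  mul a b := ⟨mul a.1 b.1, reg_mul _ _⟩
  mul_comm _ _ := Subtype.ext (SQPMV.mul_comm _ _)
  mul_assoc _ _ _ := Subtype.ext (SQPMV.mul_assoc _ _ _)
  mul_one a := Subtype.ext (by
    change mul a.1 (neg zero) = a.1
    rw [QMV.neg_zero, SQPMV.mul_one]
    exact a.2)
  mul_distrib a b c := Subtype.ext (mul_distrib a.1 b.1 c.1)

end SQPMV

/-- The regular elements of a √qPMV-algebra are closed under `⊕, •, ¬`, contain
`0, ½, 1`, and form a PMV-algebra under the restricted operations. -/
theorem sqpmv_regular_pmv {α : Type*} [QMV α] [SQPMV α] :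
    (∀ a b : α, Reg a → Reg b → Reg (QMV.add a b)) ∧
    (∀ a b : α, Reg a → Reg b → Reg (SQPMV.mul a b)) ∧
    (∀ a : α, Reg a → Reg (QMV.neg a)) ∧
    Reg (QMV.zero : α) ∧ Reg (SQPMV.half : α) ∧ Reg (QMV.one : α) ∧
    ∃ (im : MV {a : α // Reg a}) (ip : @PMV {a : α // Reg a} im),
      (∀ a b : {a : α // Reg a}, (im.add a b).val = QMV.add a.val b.val) ∧
      (∀ a : {a : α // Reg a}, (im.neg a).val = QMV.neg a.val) ∧
      im.zero.val = (QMV.zero : α) ∧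
      (@MV.one _ im).val = (QMV.one : α) ∧
      (∀ a b : {a : α // Reg a}, (ip.mul a b).val = SQPMV.mul a.val b.val) := by
  exact ⟨fun a b _ _ => QMV.reg_add a b, fun a b _ _ => SQPMV.reg_mul a b, fun _ ha => ha.neg,
    QMV.reg_zero, SQPMV.reg_half, QMV.reg_one, QMV.regMV, SQPMV.regPMV,
    fun _ _ => rfl, fun _ => rfl, rfl, QMV.neg_zero, fun _ _ => rfl⟩
end

section
/- In a √qPMV-algebra A, the relation x ≡ y defined by (x ≤ y and y ≤ x) is a congruence with respect to ⊕, • and ¬, and the quotient A/≡ is a PMV-algebra with classes [0], [½], [1] as constants. -/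
/-- `x ≡ y` iff `x ≤ y` and `y ≤ x`. -/
def equiv' {α : Type*} [QMV α] (x y : α) : Prop := QMV.le x y ∧ QMV.le y x

set_option linter.unusedSectionVars false

namespace SQPMVAux

open QMV SQPMV

variable {α : Type*} [QMV α] [SQPMV α]

theorem neg_one : neg (one : α) = zero := by
  rw [← QMV.neg_zero, QMV.neg_neg]

/-- mul by one regularizes -/
theorem one_mul' (w : α) : mul one w = add w zero := by
  rw [SQPMV.mul_comm, SQPMV.mul_one]

/-- key : x ⊕ z = (x ⊕ 0) ⊕ (z ⊕ 0) -/
theorem addeq (x z : α) : add x z = add (add x zero) (add z zero) := by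
  have h := SQPMV.mul_distrib (one : α) (neg x) z
  rw [one_mul', one_mul', one_mul'] at h
  unfold QMV.odot at h
  rw [QMV.neg_neg, QMV.neg_neg, QMV.neg_neg] at h
  rw [← QMV.neg_add_zero (add x z)] at h
  rw [QMV.add_add_zero] at h
  have h2 := congrArg neg h
  rw [QMV.neg_neg, QMV.neg_neg] at h2
  rw [QMV.neg_add_zero, QMV.neg_neg] at h2
  exact h2

theorem add_reg_right (x y : α) : add x (add y zero) = add x y := by
  rw [QMV.add_assoc, QMV.add_add_zero]

theorem add_reg_left (x y : α) : add (add x zero) y = add x y := by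
  rw [addeq (add x zero) y, QMV.add_add_zero, ← addeq]

theorem one_reg : add (one : α) zero = one := by
  have h := QMV.add_add_zero (zero : α) one
  rw [QMV.add_one] at h
  exact h

theorem zero_reg : add (zero : α) zero = zero := by
  have h : neg (add (zero : α) zero) = one := by
    rw [QMV.neg_add_zero, QMV.neg_zero, one_reg]
  have h2 := congrArg neg h
  rw [QMV.neg_neg, neg_one] at h2
  exact h2

/-- P2 : ¬(1 ⊕ x) ⊕ x = x ⊕ 0 -/
theorem P2 (x : α) : add (neg (add one x)) x = add x zero := by
  have h := QMV.luk x (add (zero : α) zero)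
  rw [zero_reg] at h
  -- h : ¬(¬x ⊕ 0) ⊕ 0 = ¬(¬0 ⊕ x) ⊕ x
  rw [QMV.neg_add_zero (neg x), QMV.neg_neg, QMV.add_add_zero] at h
  rw [QMV.neg_zero] at h
  exact h.symm

/-- P1 : ¬(1 ⊕ y) ⊕ (1 ⊕ y) = 1 ⊕ y -/
theorem P1 (y : α) : add (neg (add one y)) (add one y) = add one y := by
  have h := QMV.luk (add (zero : α) zero) (add one y)
  rw [zero_reg] at h
  -- h : ¬(¬0 ⊕ (1⊕y)) ⊕ (1⊕y) = ¬(¬(1⊕y) ⊕ 0) ⊕ 0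
  rw [QMV.neg_zero] at h
  -- LHS : ¬(1 ⊕ (1⊕y)) ⊕ (1⊕y) ; 1⊕(1⊕y) = (1⊕1)⊕y = 1⊕y
  rw [QMV.add_assoc one one y, QMV.add_one one] at h
  -- RHS : ¬(¬(1⊕y) ⊕ 0) ⊕ 0 = ((1⊕y)⊕0)⊕0 = 1⊕y... via neg_add_zero
  rw [QMV.neg_add_zero (neg (add one y)), QMV.neg_neg, QMV.add_add_zero,
    QMV.add_add_zero] at h
  exact h

/-- P3 : ¬x ⊕ x = 1 ⊕ x -/
theorem P3 (x : α) : add (neg x) x = add one x := by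
  have h := QMV.luk x (add one x)
  rw [QMV.add_assoc (neg x) one x, QMV.add_one (neg x), P1 x, P2 x,
    QMV.neg_add_zero x, add_reg_left (neg x) x] at h
  exact h.symm

/-- P4 : ¬(0 ⊕ w) ⊕ w = 1 -/
theorem P4 (w : α) : add (neg (add zero w)) w = one := by
  have h := QMV.luk (one : α) w
  rw [neg_one, QMV.add_one (neg w), neg_one, QMV.add_one (zero : α)] at h
  exact h

/-- P5 : 1 ⊕ w = 1 -/
theorem P5 (w : α) : add one w = one := by
  have h := P4 (add zero w)
  rw [QMV.add_assoc zero zero w, zero_reg] at h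
  rw [P3 (add zero w)] at h
  rw [QMV.add_assoc one zero w, one_reg] at h
  exact h

/-- P7 : ¬x ⊕ x = 1 -/
theorem le_refl (x : α) : add (neg x) x = one := by
  rw [P3, P5]

/-- 0 ⊕ y = y ⊕ 0 -/
theorem zero_add' (y : α) : add zero y = add y zero := by
  have h := QMV.luk (zero : α) y
  rw [QMV.neg_zero, P5 y, neg_one, QMV.neg_add_zero (neg y), QMV.neg_neg,
    QMV.add_add_zero] at h
  exact h

/-- D0 : ¬(x ⊕ y) ⊕ y = ¬(¬y ⊕ ¬x) ⊕ ¬x -/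
theorem D0 (x y : α) :
    add (neg (add x y)) y = add (neg (add (neg y) (neg x))) (neg x) := by
  have h := QMV.luk (neg x) y
  rw [QMV.neg_neg] at h
  exact h

/-- G : ¬(x ⊕ y) ⊕ (y ⊕ x) = 1 -/
theorem G (x y : α) : add (neg (add x y)) (add y x) = one := by
  rw [QMV.add_assoc (neg (add x y)) y x, D0 x y, ← QMV.add_assoc,
    le_refl x, QMV.add_one]

/-- commutativity, exactly -/
theorem comm (x y : α) : add x y = add y x := by
  have h := QMV.luk (add x y) (add y x)
  rw [G x y, G y x, neg_one, zero_add', zero_add', QMV.add_add_zero,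
    QMV.add_add_zero] at h
  exact h.symm

theorem equiv_refl (a : α) : equiv' a a := ⟨le_refl a, le_refl a⟩

theorem equiv_iff {a b : α} : equiv' a b ↔ add a zero = add b zero := by
  constructor
  · rintro ⟨h1, h2⟩
    have h := QMV.luk a b
    rw [show QMV.le a b from h1, show QMV.le b a from h2, neg_one,
      zero_add', zero_add'] at h
    exact h.symm
  · intro h
    constructor
    · show add (neg a) b = one
      rw [addeq (neg a) b, ← QMV.neg_add_zero a, h, QMV.neg_add_zero b,
        ← addeq (neg b) b, le_refl]
    · show add (neg b) a = one
      rw [addeq (neg b) a, ← QMV.neg_add_zero b, ← h, QMV.neg_add_zero a,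
        ← addeq (neg a) a, le_refl]

theorem equiv_of_eq {a b : α} (h : add a zero = add b zero) : equiv' a b :=
  equiv_iff.mpr h

/-- exact congruence for add -/
theorem add_congr {a b c d : α} (h1 : equiv' a b) (h2 : equiv' c d) :
    add a c = add b d := by
  rw [addeq a c, equiv_iff.mp h1, equiv_iff.mp h2, ← addeq b d]

theorem mul_reg_arg (x y : α) : mul x (add y zero) = mul x y := by
  rw [← SQPMV.mul_one y, SQPMV.mul_assoc, SQPMV.mul_one, ← SQPMV.mul_reg]

/-- exact congruence for mul -/
theorem mul_congr {a b c d : α} (h1 : equiv' a b) (h2 : equiv' c d) :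
    mul a c = mul b d := by
  rw [← mul_reg_arg a c, equiv_iff.mp h2, mul_reg_arg a d,
    SQPMV.mul_comm a d, ← mul_reg_arg d a, equiv_iff.mp h1, mul_reg_arg d b,
    SQPMV.mul_comm d b]

theorem neg_congr {a b : α} (h : equiv' a b) : equiv' (neg a) (neg b) := by
  apply equiv_of_eq
  rw [← QMV.neg_add_zero a, ← QMV.neg_add_zero b, equiv_iff.mp h]

/-- quotient operations -/
def qadd : Quot (equiv' (α := α)) → Quot (equiv' (α := α)) → Quot (equiv' (α := α)) :=
  Quot.lift
    (fun a => Quot.lift (fun c => Quot.mk _ (add a c))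
      (fun c d h => congrArg (Quot.mk _) (add_congr (equiv_refl a) h)))
    (fun a b h => by
      funext q
      induction q using Quot.ind with
      | _ c => exact congrArg (Quot.mk _) (add_congr h (equiv_refl c)))

def qneg : Quot (equiv' (α := α)) → Quot (equiv' (α := α)) :=
  Quot.lift (fun a => Quot.mk _ (neg a))
    (fun a b h => Quot.sound (neg_congr h))

def qmul : Quot (equiv' (α := α)) → Quot (equiv' (α := α)) → Quot (equiv' (α := α)) :=
  Quot.lift
    (fun a => Quot.lift (fun c => Quot.mk _ (mul a c))
      (fun c d h => congrArg (Quot.mk _) (mul_congr (equiv_refl a) h)))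
    (fun a b h => by
      funext q
      induction q using Quot.ind with
      | _ c => exact congrArg (Quot.mk _) (mul_congr h (equiv_refl c)))

instance qmv : MV (Quot (equiv' (α := α))) where
  add := qadd
  neg := qneg
  zero := Quot.mk _ zero
  add_assoc := by
    intro x y z
    induction x using Quot.ind with | _ a =>
    induction y using Quot.ind with | _ b =>
    induction z using Quot.ind with | _ c =>
    exact congrArg (Quot.mk _) (QMV.add_assoc a b c)
  add_comm := by
    intro x y
    induction x using Quot.ind with | _ a =>
    induction y using Quot.ind with | _ b =>
    exact congrArg (Quot.mk _) (comm a b)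
  add_zero := by
    intro x
    induction x using Quot.ind with | _ a =>
    exact Quot.sound (equiv_of_eq (QMV.add_add_zero a zero))
  neg_neg := by
    intro x
    induction x using Quot.ind with | _ a =>
    exact congrArg (Quot.mk _) (QMV.neg_neg a)
  add_top := by
    intro x
    induction x using Quot.ind with | _ a =>
    exact congrArg (Quot.mk _) (by rw [QMV.neg_zero, QMV.add_one])
  luk := by
    intro x y
    induction x using Quot.ind with | _ a =>
    induction y using Quot.ind with | _ b =>
    exact congrArg (Quot.mk _) (QMV.luk a b)

instance qpmv : PMV (Quot (equiv' (α := α))) where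
  mul := qmul
  mul_comm := by
    intro x y
    induction x using Quot.ind with | _ a =>
    induction y using Quot.ind with | _ b =>
    exact congrArg (Quot.mk _) (SQPMV.mul_comm a b)
  mul_assoc := by
    intro x y z
    induction x using Quot.ind with | _ a =>
    induction y using Quot.ind with | _ b =>
    induction z using Quot.ind with | _ c =>
    exact congrArg (Quot.mk _) (SQPMV.mul_assoc a b c)
  mul_one := by
    intro x
    induction x using Quot.ind with | _ a =>
    show Quot.mk _ (mul a (neg zero)) = Quot.mk _ a
    rw [QMV.neg_zero, SQPMV.mul_one]
    exact Quot.sound (equiv_of_eq (QMV.add_add_zero a zero))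
  mul_distrib := by
    intro x y z
    induction x using Quot.ind with | _ a =>
    induction y using Quot.ind with | _ b =>
    induction z using Quot.ind with | _ c =>
    exact congrArg (Quot.mk _) (SQPMV.mul_distrib a b c)

end SQPMVAux

/-- In a √qPMV-algebra, `≡` is a congruence for `⊕, •, ¬` and the quotient is a
PMV-algebra with classes `[0]`, `[1] = [¬0]` as constants. -/
theorem sqpmv_quotient_pmv {α : Type*} [QMV α] [SQPMV α] :
    Equivalence (equiv' (α := α)) ∧
    (∀ a b c d : α, equiv' a b → equiv' c d →
      equiv' (QMV.add a c) (QMV.add b d) ∧ equiv' (SQPMV.mul a c) (SQPMV.mul b d)) ∧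
    (∀ a b : α, equiv' a b → equiv' (QMV.neg a) (QMV.neg b)) ∧
    ∃ (im : MV (Quot (equiv' (α := α)))) (ip : @PMV _ im),
      (∀ a b : α, im.add (Quot.mk _ a) (Quot.mk _ b) = Quot.mk _ (QMV.add a b)) ∧
      (∀ a : α, im.neg (Quot.mk _ a) = Quot.mk _ (QMV.neg a)) ∧
      (∀ a b : α, ip.mul (Quot.mk _ a) (Quot.mk _ b) = Quot.mk _ (SQPMV.mul a b)) ∧
      im.zero = Quot.mk _ (QMV.zero : α) ∧
      (@MV.one _ im) = Quot.mk _ (QMV.one : α) := by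
  refine ⟨⟨SQPMVAux.equiv_refl, fun h => ⟨h.2, h.1⟩,
      fun h1 h2 => SQPMVAux.equiv_of_eq
        ((SQPMVAux.equiv_iff.mp h1).trans (SQPMVAux.equiv_iff.mp h2))⟩,
    ?_, ?_, ?_⟩
  · intro a b c d h1 h2
    constructor
    · rw [SQPMVAux.add_congr h1 h2]; exact SQPMVAux.equiv_refl _
    · rw [SQPMVAux.mul_congr h1 h2]; exact SQPMVAux.equiv_refl _
  · exact fun a b h => SQPMVAux.neg_congr h
  · exact ⟨SQPMVAux.qmv, SQPMVAux.qpmv, fun a b => rfl, fun a => rfl,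
      fun a b => rfl, rfl, congrArg (Quot.mk _) QMV.neg_zero⟩
end

section
/- Let A be a PMV-algebra with ¬½ = ½. On S_A = A × A define (a,b) ⊕ (c,d) = (a⊕c, ½), (a,b) • (c,d) = (a•c, ½), ¬(a,b) = (¬a, ¬b), √(a,b) = (b, ¬a), with constants 0 = (0,½), ½ = (½,½), 1 = (1,½). Then S_A is a √qPMV-algebra, and (a,b) ≤ (c,d) in S_A if and only if a ≤ c in A. -/
def pairQMV {A : Type*} [MV A] (half : A) (hhalf : MV.neg half = half) :
    QMV (A × A) where
  add p q := (MV.add p.1 q.1, half)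
  neg p := (MV.neg p.1, MV.neg p.2)
  zero := ((MV.zero : A), half)
  one := ((MV.one : A), half)
  add_assoc x y z := by simp [MV.add_assoc]
  neg_neg x := by simp [MV.neg_neg]
  add_one x := by simp [MV.one, MV.add_top]
  luk x y := by simp [MV.luk]
  neg_add_zero x := by simp [MV.add_zero, hhalf]
  add_add_zero x y := by simp [MV.add_zero]
  neg_zero := by simp [MV.one, hhalf]

def pairSQPMV {A : Type*} [MV A] [PMV A] (half : A) (hhalf : MV.neg half = half) :
    @SQPMV (A × A) (pairQMV half hhalf) :=
  letI := pairQMV half hhalf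
  { half := (half, half)
    sqrt := fun p => (p.2, MV.neg p.1)
    mul := fun p q => (PMV.mul p.1 q.1, half)
    sqrt_neg := fun x => by
      show ((MV.neg x.2, MV.neg (MV.neg x.1)) : A × A) = (MV.neg x.2, MV.neg (MV.neg x.1))
      rfl
    sqrt_sqrt := fun x => by
      show ((MV.neg x.1, MV.neg x.2) : A × A) = (MV.neg x.1, MV.neg x.2)
      rfl
    sqrt_add := fun x y => by
      show ((MV.add half MV.zero, half) : A × A) = (half, half)
      simp [MV.add_zero]
    sqrt_half := by
      show ((half, MV.neg half) : A × A) = (half, half)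
      simp [hhalf]
    mul_comm := fun x y => by
      show ((PMV.mul x.1 y.1, half) : A × A) = (PMV.mul y.1 x.1, half)
      simp [PMV.mul_comm x.1 y.1]
    mul_assoc := fun x y z => by
      show ((PMV.mul x.1 (PMV.mul y.1 z.1), half) : A × A) = (PMV.mul (PMV.mul x.1 y.1) z.1, half)
      simp [PMV.mul_assoc]
    mul_one := fun x => by
      show ((PMV.mul x.1 MV.one, half) : A × A) = (MV.add x.1 MV.zero, half)
      simp [PMV.mul_one, MV.add_zero]
    mul_reg := fun x y => by
      show ((PMV.mul x.1 y.1, half) : A × A) = (MV.add (PMV.mul x.1 y.1) MV.zero, half)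
      simp [MV.add_zero]
    mul_distrib := fun x y z => by
      have h := PMV.mul_distrib x.1 y.1 z.1
      simp only [MV.odot] at h
      exact Prod.ext h hhalf.symm
    sqrt_mul := fun x y => by
      show ((MV.add half MV.zero, half) : A × A) = (half, half)
      simp [MV.add_zero] }

/-- The pair construction `S_A` on a PMV-algebra `A` with `¬½ = ½` is a
√qPMV-algebra, and `(a,b) ≤ (c,d)` in `S_A` iff `a ≤ c` in `A`. -/
theorem pair_construction_sqpmv {A : Type*} [MV A] [PMV A]
    (half : A) (hhalf : MV.neg half = half) :
    ∃ (iq : QMV (A × A)) (is : @SQPMV (A × A) iq),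
      iq.add = (fun p q => (MV.add p.1 q.1, half)) ∧
      iq.neg = (fun p => (MV.neg p.1, MV.neg p.2)) ∧
      iq.zero = ((MV.zero : A), half) ∧
      iq.one = ((MV.one : A), half) ∧
      is.half = (half, half) ∧
      is.mul = (fun p q => (PMV.mul p.1 q.1, half)) ∧
      is.sqrt = (fun p => (p.2, MV.neg p.1)) ∧
      (∀ a b c d : A, @QMV.le _ iq (a, b) (c, d) ↔ MV.le a c) := by

  refine ⟨pairQMV half hhalf, pairSQPMV half hhalf, rfl, rfl, rfl, rfl, rfl, rfl, rfl, ?_⟩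
  intro a b c d
  constructor
  · intro h
    exact congrArg Prod.fst h
  · intro h
    exact Prod.ext h rfl
end

section
/- Let A be a PMV-algebra with ¬½ = ½ and S_A the pair construction √qPMV-algebra on A × A. Then the set R(S_A) of regular elements of S_A (those (x,y) with (x,y) ⊕ 0 = (x,y)) equals {(x, ½) : x ∈ A} and is PMV-isomorphic to A. -/
/-- In the pair construction `S_A` (with operations
`(a,b) ⊕ (c,d) = (a⊕c, ½)`, `(a,b) • (c,d) = (a•c, ½)`, `¬(a,b) = (¬a,¬b)`,
`√(a,b) = (b,¬a)`, constants `(0,½), (½,½), (1,½)`), the regular elements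
are exactly `{(x,½) : x ∈ A}` and the map `x ↦ (x,½)` is a PMV-isomorphism
from `A` onto them. -/
theorem pair_construction_regular_iso {A : Type*} [MV A] [PMV A]
    (half : A) (hhalf : MV.neg half = half) :
    {p : A × A | (MV.add p.1 MV.zero, half) = p} = {p : A × A | ∃ x : A, p = (x, half)} ∧
    ∃ f : A → A × A,
      (∀ x : A, f x = (x, half)) ∧
      Function.Injective f ∧
      (∀ p : A × A, (MV.add p.1 MV.zero, half) = p → ∃ x : A, f x = p) ∧
      (∀ x y : A, f (MV.add x y) = (MV.add (f x).1 (f y).1, half)) ∧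
      (∀ x y : A, f (PMV.mul x y) = (PMV.mul (f x).1 (f y).1, half)) ∧
      (∀ x : A, f (MV.neg x) = (MV.neg (f x).1, MV.neg (f x).2)) ∧
      f MV.zero = ((MV.zero : A), half) ∧
      f half = (half, half) ∧
      f MV.one = ((MV.one : A), half) := by
  constructor
  · ext p
    simp only [Set.mem_setOf_eq, MV.add_zero]
    constructor
    · intro h; exact ⟨p.1, h.symm⟩
    · rintro ⟨x, rfl⟩; rfl
  · refine ⟨fun x => (x, half), fun x => rfl, ?_, ?_, fun x y => by simp [MV.add_zero], fun x y => by simp [MV.add_zero], fun x => by simp [hhalf], rfl, rfl, rfl⟩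
    · intro a b h; exact (Prod.mk.injEq _ _ _ _ ▸ h).1
    · intro p hp
      rw [MV.add_zero] at hp
      exact ⟨p.1, hp⟩
end

section
/- Let t be a term in the language (⊕, •, ¬, √, 0, ½, 1) containing a subterm of the form s₁ ⊕ s₂. Then in every √qPMV-algebra A and for every assignment ā of the variables, t^A[ā] ⊕ 0 = 1 implies t^A[ā] = 1. -/
/-- Terms in the signature `(⊕, •, ¬, √, 0, ½, 1)`. -/
inductive Trm where
  | var : ℕ → Trm
  | zero : Trm
  | half : Trm
  | one : Trm
  | neg : Trm → Trm
  | sqrt : Trm → Trm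
  | add : Trm → Trm → Trm
  | mul : Trm → Trm → Trm

/-- `hasAddSub t` holds iff `t` contains a subterm of the form `s₁ ⊕ s₂`. -/
def hasAddSub : Trm → Prop
  | .var _ => False
  | .zero => False
  | .half => False
  | .one => False
  | .neg t => hasAddSub t
  | .sqrt t => hasAddSub t
  | .add _ _ => True
  | .mul s t => hasAddSub s ∨ hasAddSub t

/-- Evaluation of a term in a √qPMV-algebra under an assignment of the variables. -/
def ev {α : Type*} [QMV α] [SQPMV α] (v : ℕ → α) : Trm → α
  | .var n => v n
  | .zero => QMV.zero
  | .half => SQPMV.half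
  | .one => QMV.one
  | .neg t => QMV.neg (ev v t)
  | .sqrt t => SQPMV.sqrt (ev v t)
  | .add s t => QMV.add (ev v s) (ev v t)
  | .mul s t => SQPMV.mul (ev v s) (ev v t)

lemma reg_neg {α : Type*} [QMV α] {x : α} (h : QMV.add x QMV.zero = x) :
    QMV.add (QMV.neg x) QMV.zero = QMV.neg x := by
  rw [← QMV.neg_add_zero, h]

lemma key {α : Type*} [QMV α] [SQPMV α] (v : ℕ → α) :
    ∀ t : Trm, hasAddSub t →
      QMV.add (ev v t) QMV.zero = ev v t ∨
      ∃ s : α, ev v t = SQPMV.sqrt s ∧ QMV.add s QMV.zero = s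
  | .var _, h => h.elim
  | .zero, h => h.elim
  | .half, h => h.elim
  | .one, h => h.elim
  | .neg t, h => by
      rcases key v t h with hr | ⟨s, hs, hreg⟩
      · exact Or.inl (reg_neg hr)
      · exact Or.inr ⟨QMV.neg s, by rw [ev, hs, SQPMV.sqrt_neg], reg_neg hreg⟩
  | .sqrt t, h => by
      rcases key v t h with hr | ⟨s, hs, hreg⟩
      · exact Or.inr ⟨ev v t, rfl, hr⟩
      · left
        show QMV.add (SQPMV.sqrt (ev v t)) QMV.zero = SQPMV.sqrt (ev v t)
        rw [hs, SQPMV.sqrt_sqrt]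
        exact reg_neg hreg
  | .add s t, _ => Or.inl (QMV.add_add_zero _ _)
  | .mul s t, _ => Or.inl (SQPMV.mul_reg _ _).symm

/-- If a term contains a subterm of the form `s₁ ⊕ s₂`, then in every √qPMV-algebra
and for every assignment, `t ⊕ 0 = 1` implies `t = 1`. -/
theorem term_with_add_regular_one {α : Type*} [QMV α] [SQPMV α]
    (t : Trm) (ht : hasAddSub t) (v : ℕ → α)
    (h : QMV.add (ev v t) QMV.zero = QMV.one) : ev v t = QMV.one := by
  rcases key v t ht with hr | ⟨s, hs, hreg⟩
  · exact hr.symm.trans h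
  · have e1 : QMV.add (ev v t) QMV.zero = SQPMV.half := by
      rw [hs, ← hreg]
      exact SQPMV.sqrt_add s QMV.zero
    have hhalf : (SQPMV.half : α) = QMV.one := e1.symm.trans h
    have sqrt1 : SQPMV.sqrt (QMV.one : α) = QMV.one := by
      rw [← hhalf, SQPMV.sqrt_half]
    have hneg1 : QMV.neg (QMV.one : α) = QMV.zero := by
      rw [← QMV.neg_zero, QMV.neg_neg]
    have h01 : (QMV.zero : α) = QMV.one := by
      rw [← hneg1, ← SQPMV.sqrt_sqrt (QMV.one : α), sqrt1, sqrt1]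
    have s1 : s = QMV.one := by
      rw [← hreg, h01, QMV.add_one]
    rw [hs, s1, sqrt1]
end

section
/- Let A be a PMV-algebra with fixpoint ½ of negation satisfying the PMV_{1/2} axioms. Then the subalgebra G_A(½) generated by {0, ½, 1} is a simple PMV-algebra; in fact every element x < 1 of G_A(½) is nilpotent: there exists k with ⊙_k x = 0. -/
variable {α : Type*} [MV α] [PMV α]

/-- `(½)ⁿ`: the `n`-fold `•`-power of `half` (`(½)⁰ = 1`). -/
def hpow (half : α) : ℕ → α
  | 0 => MV.one
  | n + 1 => PMV.mul (hpow half n) half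

/-- The dyadic element `a/2ⁿ`: the `⊕`-sum of `a` copies of `(½)ⁿ`. -/
def dy (half : α) : ℕ → ℕ → α
  | 0, _ => MV.zero
  | a + 1, n => MV.add (dy half a n) (hpow half n)

/-- The PMV_{1/2} axioms for a PMV-algebra with a distinguished element `half`
(using natural-number truncated subtraction for `max{0, ·}`). -/
structure IsPMVHalf (half : α) : Prop where
  neg_half : MV.neg half = half
  odot_dy : ∀ a b n m : ℕ, 1 ≤ m → m ≤ n → a ≤ 2 ^ n → b ≤ 2 ^ m →
    MV.odot (dy half a n) (dy half b m) = dy half (a + b * 2 ^ (n - m) - 2 ^ n) n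
  mul_dy : ∀ a b n m : ℕ, 1 ≤ n → 1 ≤ m → a ≤ 2 ^ n → b ≤ 2 ^ m →
    PMV.mul (dy half a n) (dy half b m) = dy half (a * b) (n + m)
  neg_dy : ∀ a n : ℕ, 1 ≤ n → a ≤ 2 ^ n →
    MV.neg (dy half a n) = dy half (2 ^ n - a) n

/-- The subalgebra `G_A(½)` generated by `{0, ½, 1}`. -/
inductive GenH (half : α) : α → Prop
  | zero : GenH half MV.zero
  | half : GenH half half
  | one : GenH half MV.one
  | add : ∀ {x y : α}, GenH half x → GenH half y → GenH half (MV.add x y)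
  | neg : ∀ {x : α}, GenH half x → GenH half (MV.neg x)
  | mul : ∀ {x y : α}, GenH half x → GenH half y → GenH half (PMV.mul x y)

/-- The `k`-fold `⊙`-power of `x` (`⊙₀ x = 1`). -/
def odpow (x : α) : ℕ → α
  | 0 => MV.one
  | k + 1 => MV.odot (odpow x k) x

lemma mv_zero_add (x : α) : MV.add MV.zero x = x := by
  rw [MV.add_comm, MV.add_zero]

lemma mv_neg_one : (MV.neg MV.one : α) = MV.zero := MV.neg_neg _

lemma mv_odot_one (x : α) : MV.odot MV.one x = x := by
  rw [MV.odot, mv_neg_one, mv_zero_add, MV.neg_neg]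

lemma mv_add_eq_neg_odot (x y : α) :
    MV.add x y = MV.neg (MV.odot (MV.neg x) (MV.neg y)) := by
  rw [MV.odot, MV.neg_neg, MV.neg_neg, MV.neg_neg]

lemma dy_one_one (half : α) : dy half 1 1 = half := by
  show MV.add (MV.zero) (PMV.mul MV.one half) = half
  rw [mv_zero_add, PMV.mul_comm, PMV.mul_one]

lemma dy_top (half : α) (h : IsPMVHalf half) (n : ℕ) (hn : 1 ≤ n) :
    dy half (2 ^ n) n = MV.one := by
  have := h.neg_dy (2 ^ n) n hn le_rfl
  rw [Nat.sub_self] at this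
  have : MV.neg (MV.neg (dy half (2 ^ n) n)) = MV.neg (dy half 0 n) := by rw [this]
  rw [MV.neg_neg] at this
  simpa [dy, MV.one] using this

lemma dy_one_eq_one (half : α) (h : IsPMVHalf half) : (MV.one : α) = dy half 2 1 := by
  rw [show (2 : ℕ) = 2 ^ 1 by norm_num, dy_top half h 1 le_rfl]

/-- `⊕` of dyadics is dyadic (case `m ≤ n`). -/
lemma add_dy (half : α) (h : IsPMVHalf half) (a b n m : ℕ) (hm : 1 ≤ m) (hmn : m ≤ n)
    (ha : a ≤ 2 ^ n) (hb : b ≤ 2 ^ m) :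
    ∃ c, c ≤ 2 ^ n ∧ MV.add (dy half a n) (dy half b m) = dy half c n := by
  have hpow : 2 ^ m * 2 ^ (n - m) = 2 ^ n := by
    rw [← pow_add]; congr 1; omega
  set a' := 2 ^ n - a with ha'
  set b' := 2 ^ m - b with hb'
  have ha'le : a' ≤ 2 ^ n := Nat.sub_le _ _
  have hb'le : b' ≤ 2 ^ m := Nat.sub_le _ _
  set d := a' + b' * 2 ^ (n - m) - 2 ^ n with hd
  have hdle : d ≤ 2 ^ n := by
    have : b' * 2 ^ (n - m) ≤ 2 ^ m * 2 ^ (n - m) := Nat.mul_le_mul_right _ hb'le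
    omega
  refine ⟨2 ^ n - d, Nat.sub_le _ _, ?_⟩
  rw [mv_add_eq_neg_odot, h.neg_dy a n (hm.trans hmn) ha, h.neg_dy b m hm hb,
    h.odot_dy a' b' n m hm hmn ha'le hb'le, h.neg_dy d n (hm.trans hmn) hdle]

/-- Every element of `G_A(½)` is dyadic. -/
lemma gen_dy (half : α) (h : IsPMVHalf half) (x : α) (hx : GenH half x) :
    ∃ a n, 1 ≤ n ∧ a ≤ 2 ^ n ∧ x = dy half a n := by
  induction hx with
  | zero => exact ⟨0, 1, le_rfl, by norm_num, rfl⟩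
  | half => exact ⟨1, 1, le_rfl, by norm_num, (dy_one_one half).symm⟩
  | one => exact ⟨2, 1, le_rfl, by norm_num, dy_one_eq_one half h⟩
  | add hx hy ihx ihy =>
    obtain ⟨a, n, hn, ha, rfl⟩ := ihx
    obtain ⟨b, m, hm, hb, rfl⟩ := ihy
    rcases le_total m n with hmn | hnm
    · obtain ⟨c, hc, hce⟩ := add_dy half h a b n m hm hmn ha hb
      exact ⟨c, n, hn, hc, hce⟩
    · obtain ⟨c, hc, hce⟩ := add_dy half h b a m n hn hnm hb ha
      exact ⟨c, m, hm, hc, by rw [MV.add_comm]; exact hce⟩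
  | neg hx ihx =>
    obtain ⟨a, n, hn, ha, rfl⟩ := ihx
    exact ⟨2 ^ n - a, n, hn, Nat.sub_le _ _, h.neg_dy a n hn ha⟩
  | mul hx hy ihx ihy =>
    obtain ⟨a, n, hn, ha, rfl⟩ := ihx
    obtain ⟨b, m, hm, hb, rfl⟩ := ihy
    refine ⟨a * b, n + m, by omega, ?_, h.mul_dy a b n m hn hm ha hb⟩
    calc a * b ≤ 2 ^ n * 2 ^ m := Nat.mul_le_mul ha hb
      _ = 2 ^ (n + m) := (pow_add 2 n m).symm

lemma odpow_dy (half : α) (h : IsPMVHalf half) (a n : ℕ) (hn : 1 ≤ n) (ha : a ≤ 2 ^ n) :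
    ∀ k, 1 ≤ k → odpow (dy half a n) k = dy half (k * a - (k - 1) * 2 ^ n) n := by
  intro k hk
  induction k with
  | zero => omega
  | succ k ih =>
    rcases Nat.eq_or_lt_of_le hk with hk1 | hk1
    · have : k = 0 := by omega
      subst this
      show MV.odot MV.one (dy half a n) = _
      rw [mv_odot_one]
      norm_num
    · have hk' : 1 ≤ k := by omega
      obtain ⟨j, rfl⟩ : ∃ j, k = j + 1 := ⟨k - 1, by omega⟩
      set c := (j + 1) * a - j * 2 ^ n with hc
      have hja : (j + 1) * a = j * a + a := by ring
      have hmul : j * a ≤ j * 2 ^ n := Nat.mul_le_mul_left _ ha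
      have hcle : c ≤ 2 ^ n := by omega
      show MV.odot (odpow (dy half a n) (j + 1)) (dy half a n) = _
      rw [ih hk']
      simp only [Nat.add_sub_cancel]
      rw [h.odot_dy c a n n hn le_rfl hcle ha]
      congr 1
      have e1 : (j + 1 + 1) * a = (j + 1) * a + a := by ring
      have e2 : (j + 1) * 2 ^ n = j * 2 ^ n + 2 ^ n := by ring
      rw [Nat.sub_self, pow_zero, mul_one]
      omega

/-- In a PMV_{1/2}-algebra, the subalgebra `G_A(½)` generated by `{0,½,1}` is a simple
PMV-algebra: it is nontrivial and every element `x ≠ 1` in it is nilpotent. -/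
theorem genhalf_simple (half : α) (h : IsPMVHalf half) (hnt : (MV.zero : α) ≠ MV.one) :
    ((MV.zero : α) ≠ MV.one) ∧
    ∀ x : α, GenH half x → x ≠ MV.one → ∃ k : ℕ, 1 ≤ k ∧ odpow x k = MV.zero := by
  refine ⟨hnt, fun x hx hxone => ?_⟩
  obtain ⟨a, n, hn, ha, rfl⟩ := gen_dy half h x hx
  have halt : a < 2 ^ n := by
    rcases Nat.lt_or_ge a (2 ^ n) with h' | h'
    · exact h'
    · exact absurd (by rw [show a = 2 ^ n by omega]; exact dy_top half h n hn) hxone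
  refine ⟨2 ^ n, Nat.one_le_two_pow, ?_⟩
  rw [odpow_dy half h a n hn ha (2 ^ n) Nat.one_le_two_pow]
  have : 2 ^ n * a ≤ (2 ^ n - 1) * 2 ^ n := by
    rw [Nat.mul_comm (2 ^ n - 1)]
    exact Nat.mul_le_mul_left _ (by omega)
  rw [show 2 ^ n * a - (2 ^ n - 1) * 2 ^ n = 0 by omega]
  rfl
end
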